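/- The two stabilizer groups S_a = ⟨XXZIZI, ZXXZII, IZXXZI, ZIZXXI, IIIIIX⟩ and S_b = ⟨YIZXXY, ZXIIXZ, IZXXXX, IIIZIZ, ZZZIZI⟩ each define a 2-dimensional joint +1-eigenspace in (C^2)^{⊗6}, and these two subspaces are orthogonal; moreover, the resulting hybrid code has minimum distance 1, since the weight-1 error E = IIIIXI satisfies P_b E P_a ≠ 0. -/

import Mathlib

open Matrix Finset
open scoped InnerProductSpace

/-- Single-qubit Pauli matrices `I, X, Y, Z`, encoded as `0,1,2,3`. -/
noncomputable def pmat : Fin 4 → Matrix (ZMod 2) (ZMod 2) ℂ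
  | 0 => 1
  | 1 => fun i j => if i = j then 0 else 1
  | 2 => fun i j => if i = j then 0 else if i = 0 then -Complex.I else Complex.I
  | 3 => fun i j => if i = j then (if i = 0 then 1 else -1) else 0

/-- The six-qubit Pauli string determined by `s : Fin 6 → Fin 4`. -/
noncomputable def pauliString (s : Fin 6 → Fin 4) :
    Matrix (Fin 6 → ZMod 2) (Fin 6 → ZMod 2) ℂ :=
  fun y z => ∏ j, pmat (s j) (y j) (z j)

/-- Generators of `S_a = ⟨XXZIZI, ZXXZII, IZXXZI, ZIZXXI, IIIIIX⟩`. -/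
noncomputable def genA : Fin 5 → Matrix (Fin 6 → ZMod 2) (Fin 6 → ZMod 2) ℂ :=
  ![pauliString ![1,1,3,0,3,0], pauliString ![3,1,1,3,0,0],
    pauliString ![0,3,1,1,3,0], pauliString ![3,0,3,1,1,0],
    pauliString ![0,0,0,0,0,1]]

/-- Generators of `S_b = ⟨YIZXXY, ZXIIXZ, IZXXXX, IIIZIZ, ZZZIZI⟩`. -/
noncomputable def genB : Fin 5 → Matrix (Fin 6 → ZMod 2) (Fin 6 → ZMod 2) ℂ :=
  ![pauliString ![2,0,3,1,1,2], pauliString ![3,1,0,0,1,3],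
    pauliString ![0,3,1,1,1,1], pauliString ![0,0,0,3,0,3],
    pauliString ![3,3,3,0,3,0]]

/-- The projector onto the joint `+1`-eigenspace of the group generated by
five commuting stabilizer generators: `(1/32) Σ_{S ∈ group} S`. -/
noncomputable def stabProj
    (g : Fin 5 → Matrix (Fin 6 → ZMod 2) (Fin 6 → ZMod 2) ℂ) :
    Matrix (Fin 6 → ZMod 2) (Fin 6 → ZMod 2) ℂ :=
  (1 / 32 : ℂ) • ∑ v : Fin 5 → Bool,
    (List.ofFn (fun i => if v i then g i else 1)).prod

/-- The joint `+1`-eigenspace of the five generators, as a subspace of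
`(ℂ²)^{⊗6}`. -/
noncomputable def stabCode
    (g : Fin 5 → Matrix (Fin 6 → ZMod 2) (Fin 6 → ZMod 2) ℂ) :
    Submodule ℂ (EuclideanSpace ℂ (Fin 6 → ZMod 2)) :=
  ⨅ i : Fin 5, LinearMap.ker (Matrix.toEuclideanLin (g i) - LinearMap.id)

/-!
Each generator list consists of commuting Pauli strings squaring to `1`, so the stabilizer
projector `P = 2⁻⁵ ∑_{S ∈ group} S = 2⁻⁵ ∏ (1 + gᵢ)` is the projection onto the code, whose
dimension is therefore `tr P`. A Pauli string has trace `0` unless it is `±1, ±i` times the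
identity, and only the empty product of generators is, so `tr P = 2⁻⁵ · 2⁶ = 2`.
The Hermitian string `M = IYZZYI` lies in `S_a` while `-M` lies in `S_b`, so the two codes are
eigenspaces of `M` for the eigenvalues `1` and `-1`, hence orthogonal. Finally
`tr (E P_b E P_a) = 1/8 ≠ 0`. All products of Pauli strings are computed symbolically, in the
group of phased Pauli strings, where they are decidable.
-/

section TensorPower

theorem Matrix.of_prod_mul_of_prod {ι n R : Type*} [Fintype ι] [DecidableEq ι] [Fintype n]
    [CommSemiring R] (A B : ι → Matrix n n R) :
    (of fun y z => ∏ j, A j (y j) (z j) : Matrix (ι → n) (ι → n) R) *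
        of (fun y z => ∏ j, B j (y j) (z j)) =
      of fun y z => ∏ j, (A j * B j) (y j) (z j) := by
  ext y z
  simp only [mul_apply, of_apply, ← prod_mul_distrib]
  exact (Fintype.prod_sum fun j b => A j (y j) b * B j b (z j)).symm

theorem Matrix.of_prod_one {ι n R : Type*} [Fintype ι] [DecidableEq ι] [DecidableEq n]
    [CommSemiring R] :
    (of fun y z => ∏ j, (1 : Matrix n n R) (y j) (z j) : Matrix (ι → n) (ι → n) R) = 1 := by
  ext y z
  simp [one_apply, prod_boole, funext_iff]

theorem Matrix.trace_of_prod {ι n R : Type*} [Fintype ι] [DecidableEq ι] [Fintype n]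
    [CommSemiring R] (A : ι → Matrix n n R) :
    trace (of fun y z => ∏ j, A j (y j) (z j) : Matrix (ι → n) (ι → n) R) = ∏ j, trace (A j) :=
  (Fintype.prod_sum fun j b => A j b b).symm

theorem Matrix.conjTranspose_of_prod {ι n R : Type*} [Fintype ι] [CommSemiring R] [StarRing R]
    (A : ι → Matrix n n R) :
    (of fun y z => ∏ j, A j (y j) (z j) : Matrix (ι → n) (ι → n) R)ᴴ =
      of fun y z => ∏ j, (A j)ᴴ (y j) (z j) := by
  ext y z
  simp only [conjTranspose_apply, of_apply, star_prod]

end TensorPower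

section PauliLetters

noncomputable def iPow (k : ZMod 4) : ℂ := Complex.I ^ k.val

lemma iPow_zero : iPow 0 = 1 := pow_zero _

lemma iPow_two : iPow 2 = -1 := Complex.I_sq

lemma iPow_add (k l : ZMod 4) : iPow (k + l) = iPow k * iPow l := by
  rw [iPow, iPow, iPow, ZMod.val_add, ← pow_add, ← Nat.mod_add_div (k.val + l.val) 4, pow_add,
    pow_mul, Complex.I_pow_four, one_pow, mul_one, Nat.mod_add_div]

lemma iPow_sum {α : Type*} (s : Finset α) (f : α → ZMod 4) :
    iPow (∑ a ∈ s, f a) = ∏ a ∈ s, iPow (f a) := by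
  induction s using Finset.cons_induction with
  | empty => exact iPow_zero
  | cons a s ha ih => rw [sum_cons, prod_cons, iPow_add, ih]

/-- With `letterPhase`, the Pauli multiplication table
`pmat a * pmat b = iPow (letterPhase a b) • pmat (letterMul a b)`. -/
def letterMul : Fin 4 → Fin 4 → Fin 4 :=
  ![![0, 1, 2, 3], ![1, 0, 3, 2], ![2, 3, 0, 1], ![3, 2, 1, 0]]

def letterPhase : Fin 4 → Fin 4 → ZMod 4 :=
  ![![0, 0, 0, 0], ![0, 0, 1, 3], ![0, 3, 0, 1], ![0, 1, 3, 0]]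

lemma ZMod.sum_two {M : Type*} [AddCommMonoid M] (f : ZMod 2 → M) : ∑ b, f b = f 0 + f 1 :=
  Fin.sum_univ_two f

lemma ZMod.eq_zero_or_eq_one_of_two (x : ZMod 2) : x = 0 ∨ x = 1 := by
  revert x; decide

lemma pmat_mul (a b : Fin 4) :
    pmat a * pmat b = iPow (letterPhase a b) • pmat (letterMul a b) := by
  ext i j
  simp only [mul_apply, Matrix.smul_apply, ZMod.sum_two]
  fin_cases a <;> fin_cases b <;>
    rcases ZMod.eq_zero_or_eq_one_of_two i with rfl | rfl <;>
    rcases ZMod.eq_zero_or_eq_one_of_two j with rfl | rfl <;>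
    simp [pmat, letterMul, letterPhase, iPow, show (1 : ZMod 4).val = 1 from rfl,
      show (3 : ZMod 4).val = 3 from rfl, pow_succ]

lemma pmat_conjTranspose (a : Fin 4) : (pmat a)ᴴ = pmat a := by
  ext i j
  rw [conjTranspose_apply]
  fin_cases a <;>
    rcases ZMod.eq_zero_or_eq_one_of_two i with rfl | rfl <;>
    rcases ZMod.eq_zero_or_eq_one_of_two j with rfl | rfl <;>
    simp [pmat]

lemma trace_pmat (a : Fin 4) : (pmat a).trace = if a = 0 then 2 else 0 := by
  rw [trace, ZMod.sum_two, diag_apply, diag_apply]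
  fin_cases a <;> norm_num [pmat]

lemma letterPhase_add_letterPhase (a b c : Fin 4) :
    letterPhase a b + letterPhase (letterMul a b) c =
      letterPhase b c + letterPhase a (letterMul b c) := by
  revert a b c; decide

lemma letterMul_zero_left (a : Fin 4) : letterMul 0 a = a := by revert a; decide

lemma letterMul_zero_right (a : Fin 4) : letterMul a 0 = a := by revert a; decide

lemma letterPhase_zero_left (a : Fin 4) : letterPhase 0 a = 0 := by revert a; decide

lemma letterPhase_zero_right (a : Fin 4) : letterPhase a 0 = 0 := by revert a; decide

lemma letterMul_assoc (a b c : Fin 4) :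
    letterMul (letterMul a b) c = letterMul a (letterMul b c) := by
  revert a b c; decide

end PauliLetters

section PauliString

lemma pauliString_eq_of (s : Fin 6 → Fin 4) :
    pauliString s = of fun y z => ∏ j, pmat (s j) (y j) (z j) :=
  rfl

lemma pauliString_mul (s t : Fin 6 → Fin 4) :
    pauliString s * pauliString t = of fun y z => ∏ j, (pmat (s j) * pmat (t j)) (y j) (z j) := by
  rw [pauliString_eq_of, pauliString_eq_of, of_prod_mul_of_prod]

lemma pauliString_zero : pauliString (fun _ => 0) = 1 :=
  of_prod_one

lemma trace_pauliString (s : Fin 6 → Fin 4) :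
    (pauliString s).trace = if s = (fun _ => 0) then 64 else 0 := by
  rw [pauliString_eq_of, trace_of_prod]
  norm_num [trace_pmat, prod_ite_zero, funext_iff]

lemma pauliString_isHermitian (s : Fin 6 → Fin 4) : (pauliString s).IsHermitian := by
  rw [IsHermitian, pauliString_eq_of, conjTranspose_of_prod]
  simp only [pmat_conjTranspose]

end PauliString

/-- Stands for the matrix `i ^ phase • pauliString letters`, see `PauliOp.toMatrix`. -/
@[ext]
structure PauliOp where
  phase : ZMod 4
  letters : Fin 6 → Fin 4

namespace PauliOp

instance : DecidableEq PauliOp := fun p q =>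
  decidable_of_iff (p.phase = q.phase ∧ p.letters = q.letters) PauliOp.ext_iff.symm

instance : Mul PauliOp :=
  ⟨fun p q => ⟨p.phase + q.phase + ∑ j, letterPhase (p.letters j) (q.letters j),
    fun j => letterMul (p.letters j) (q.letters j)⟩⟩

instance : One PauliOp := ⟨⟨0, fun _ => 0⟩⟩

@[simp] lemma mul_phase (p q : PauliOp) :
    (p * q).phase = p.phase + q.phase + ∑ j, letterPhase (p.letters j) (q.letters j) := rfl

@[simp] lemma mul_letters (p q : PauliOp) :
    (p * q).letters = fun j => letterMul (p.letters j) (q.letters j) := rfl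

@[simp] lemma one_phase : (1 : PauliOp).phase = 0 := rfl

@[simp] lemma one_letters : (1 : PauliOp).letters = fun _ => 0 := rfl

instance : Monoid PauliOp where
  mul_assoc p q r := by
    ext
    · simp only [mul_phase, mul_letters]
      have hcocycle := Finset.sum_congr rfl fun j (_ : j ∈ univ) =>
        letterPhase_add_letterPhase (p.letters j) (q.letters j) (r.letters j)
      simp only [sum_add_distrib] at hcocycle
      linear_combination hcocycle
    · simp only [mul_letters, letterMul_assoc]
  one_mul p := by
    ext <;> simp [letterPhase_zero_left, letterMul_zero_left]
  mul_one p := by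
    ext <;> simp [letterPhase_zero_right, letterMul_zero_right]

noncomputable def toMatrix : PauliOp →* Matrix (Fin 6 → ZMod 2) (Fin 6 → ZMod 2) ℂ where
  toFun p := iPow p.phase • pauliString p.letters
  map_one' := by rw [one_phase, one_letters, iPow_zero, one_smul, pauliString_zero]
  map_mul' p q := by
    simp only [smul_mul_smul_comm, pauliString_mul]
    ext y z
    simp only [mul_phase, mul_letters, iPow_add, iPow_sum, pmat_mul, Matrix.smul_apply,
      smul_eq_mul, of_apply, pauliString_eq_of, prod_mul_distrib]
    ring

lemma toMatrix_apply (p : PauliOp) : toMatrix p = iPow p.phase • pauliString p.letters := rfl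

/-- The trace of `toMatrix p`, divided by `64`; it lies in `ℤ[i]`, where sums are decidable. -/
def normTrace (p : PauliOp) : GaussianInt :=
  if p.letters = (fun _ => 0) then ⟨0, 1⟩ ^ p.phase.val else 0

lemma trace_toMatrix (p : PauliOp) : (toMatrix p).trace = 64 * (normTrace p : ℂ) := by
  rw [toMatrix_apply, trace_smul, trace_pauliString, normTrace]
  split_ifs
  · rw [map_pow]
    simp [iPow, GaussianInt.toComplex_def, mul_comm]
  · simp

end PauliOp

section SubsetProd

def subsetProd {M : Type*} [Monoid M] {n : ℕ} (g : Fin n → M) (v : Fin n → Bool) : M :=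
  (List.ofFn fun i => if v i then g i else 1).prod

lemma map_subsetProd {M N F : Type*} [Monoid M] [Monoid N] [FunLike F M N]
    [MonoidHomClass F M N] (f : F) {n : ℕ} (g : Fin n → M) (v : Fin n → Bool) :
    f (subsetProd g v) = subsetProd (f ∘ g) v := by
  simp only [subsetProd, map_list_prod, List.map_ofFn, Function.comp_def, apply_ite f, map_one]

lemma sum_subsetProd {R : Type*} [Semiring R] {n : ℕ} (g : Fin n → R) :
    ∑ v, subsetProd g v = (List.ofFn fun i => 1 + g i).prod := by
  induction n with
  | zero => simp [subsetProd]
  | succ n ih =>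
    rw [List.ofFn_succ, List.prod_cons, ← ih, ← (Fin.consEquiv fun _ => Bool).sum_comp,
      Fintype.sum_prod_type, Fintype.sum_bool]
    simp [subsetProd, List.ofFn_succ, Fin.consEquiv, add_mul, mul_sum, sum_add_distrib, add_comm]

theorem List.mul_prod_eq_of_mem {M : Type*} [Monoid M] {a x : M} {l : List M} (hx : x ∈ l)
    (hax : a * x = x) (hcomm : ∀ y ∈ l, Commute a y) : a * l.prod = l.prod := by
  induction l with
  | nil => simp at hx
  | cons y l ih =>
    rw [prod_cons, ← mul_assoc]
    rcases mem_cons.1 hx with rfl | hx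
    · rw [hax]
    · rw [(hcomm y mem_cons_self).eq, mul_assoc,
        ih hx fun z hz => hcomm z (mem_cons_of_mem _ hz)]

end SubsetProd

section EuclideanLin

lemma toEuclideanLin_list_prod_apply {𝕜 n : Type*} [RCLike 𝕜] [Fintype n] [DecidableEq n]
    {l : List (Matrix n n 𝕜)} {x : EuclideanSpace 𝕜 n} (h : ∀ A ∈ l, toEuclideanLin A x = x) :
    toEuclideanLin l.prod x = x := by
  induction l with
  | nil => simp
  | cons A l ih =>
    rw [List.prod_cons, toLpLin_mul_same, LinearMap.comp_apply,
      ih fun B hB => h B (List.mem_cons_of_mem _ hB), h A List.mem_cons_self]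

lemma Matrix.IsHermitian.inner_eq_zero_of_apply_eq_neg {𝕜 n : Type*} [RCLike 𝕜] [Fintype n]
    [DecidableEq n] {M : Matrix n n 𝕜} (hM : M.IsHermitian) {u v : EuclideanSpace 𝕜 n}
    (hu : toEuclideanLin M u = u) (hv : toEuclideanLin M v = -v) : ⟪u, v⟫_𝕜 = 0 := by
  have h : ⟪u, v⟫_𝕜 = -⟪u, v⟫_𝕜 := calc
    ⟪u, v⟫_𝕜 = ⟪toEuclideanLin M u, v⟫_𝕜 := by rw [hu]
    _ = ⟪u, toEuclideanLin M v⟫_𝕜 := isSymmetric_toEuclideanLin_iff.2 hM u v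
    _ = -⟪u, v⟫_𝕜 := by rw [hv, inner_neg_right]
  linear_combination h / 2

end EuclideanLin

section Stabilizer

lemma stabProj_eq_sum_subsetProd (g : Fin 5 → Matrix (Fin 6 → ZMod 2) (Fin 6 → ZMod 2) ℂ) :
    stabProj g = (1 / 32 : ℂ) • ∑ v, subsetProd g v :=
  rfl

variable {g : Fin 5 → Matrix (Fin 6 → ZMod 2) (Fin 6 → ZMod 2) ℂ}

lemma mul_stabProj (hcomm : ∀ i j, Commute (g i) (g j)) (hsq : ∀ i, g i * g i = 1) (i : Fin 5) :
    g i * stabProj g = stabProj g := by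
  rw [stabProj_eq_sum_subsetProd, sum_subsetProd, mul_smul_comm]
  congr 1
  refine List.mul_prod_eq_of_mem (List.mem_ofFn.2 ⟨i, rfl⟩) ?_ ?_
  · rw [mul_add, mul_one, hsq, add_comm]
  · simp only [List.mem_ofFn, forall_exists_index, forall_apply_eq_imp_iff]
    exact fun j => (Commute.one_right _).add_right (hcomm i j)

lemma mem_stabCode {x : EuclideanSpace ℂ (Fin 6 → ZMod 2)} :
    x ∈ stabCode g ↔ ∀ i, toEuclideanLin (g i) x = x := by
  simp [stabCode, sub_eq_zero]

lemma toEuclideanLin_subsetProd_apply {x : EuclideanSpace ℂ (Fin 6 → ZMod 2)}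
    (hx : x ∈ stabCode g) (v : Fin 5 → Bool) : toEuclideanLin (subsetProd g v) x = x := by
  refine toEuclideanLin_list_prod_apply fun A hA => ?_
  obtain ⟨i, rfl⟩ := List.mem_ofFn.1 hA
  split_ifs
  · exact mem_stabCode.1 hx i
  · simp

lemma isProj_stabProj (hcomm : ∀ i j, Commute (g i) (g j)) (hsq : ∀ i, g i * g i = 1) :
    LinearMap.IsProj (stabCode g) (toEuclideanLin (stabProj g)) where
  map_mem x := mem_stabCode.2 fun i => by
    rw [← LinearMap.comp_apply, ← toLpLin_mul_same, mul_stabProj hcomm hsq]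
  map_id x hx := by
    rw [stabProj_eq_sum_subsetProd, map_smul, map_sum, LinearMap.smul_apply, LinearMap.sum_apply]
    simp only [toEuclideanLin_subsetProd_apply hx, sum_const, card_univ, Fintype.card_pi,
      Fintype.card_bool, prod_const, Fintype.card_fin, ← Nat.cast_smul_eq_nsmul ℂ, smul_smul]
    norm_num

lemma finrank_stabCode (hcomm : ∀ i j, Commute (g i) (g j)) (hsq : ∀ i, g i * g i = 1) :
    (Module.finrank ℂ (stabCode g) : ℂ) = (stabProj g).trace := by
  rw [← (isProj_stabProj hcomm hsq).trace, toEuclideanLin_eq_toLin_orthonormal,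
    LinearMap.trace_eq_matrix_trace ℂ (EuclideanSpace.basisFun _ ℂ).toBasis,
    LinearMap.toMatrix_toLin]

end Stabilizer

section PauliStabilizer

open PauliOp

lemma stabProj_toMatrix (p : Fin 5 → PauliOp) :
    stabProj (toMatrix ∘ p) = (1 / 32 : ℂ) • ∑ v, toMatrix (subsetProd p v) := by
  simp only [stabProj_eq_sum_subsetProd, map_subsetProd]

lemma finrank_stabCode_toMatrix (p : Fin 5 → PauliOp) (hcomm : ∀ i j, p i * p j = p j * p i)
    (hsq : ∀ i, p i * p i = 1) :
    (Module.finrank ℂ (stabCode (toMatrix ∘ p)) : ℂ) =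
      2 * ↑(∑ v, normTrace (subsetProd p v)) := by
  have hcomm' i j : Commute ((toMatrix ∘ p) i) ((toMatrix ∘ p) j) := by
    simp only [Commute, SemiconjBy, Function.comp_apply, ← map_mul, hcomm]
  have hsq' i : (toMatrix ∘ p) i * (toMatrix ∘ p) i = 1 := by
    simp only [Function.comp_apply, ← map_mul, hsq, map_one]
  rw [finrank_stabCode hcomm' hsq', stabProj_toMatrix, trace_smul, trace_sum]
  simp only [trace_toMatrix, ← mul_sum, map_sum, smul_eq_mul]
  ring

lemma stabCode_toMatrix_orthogonal (p q : Fin 5 → PauliOp) (v w : Fin 5 → Bool)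
    (s : Fin 6 → Fin 4) (hp : subsetProd p v = ⟨0, s⟩) (hq : subsetProd q w = ⟨2, s⟩) :
    ∀ x ∈ stabCode (toMatrix ∘ p), ∀ y ∈ stabCode (toMatrix ∘ q), ⟪x, y⟫_ℂ = 0 := by
  intro x hx y hy
  have hMx := toEuclideanLin_subsetProd_apply hx v
  have hMy := toEuclideanLin_subsetProd_apply hy w
  rw [← map_subsetProd, hp, toMatrix_apply, iPow_zero, one_smul] at hMx
  rw [← map_subsetProd, hq, toMatrix_apply, iPow_two, neg_one_smul, map_neg,
    LinearMap.neg_apply, neg_eq_iff_eq_neg] at hMy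
  exact (pauliString_isHermitian s).inner_eq_zero_of_apply_eq_neg hMx hMy

lemma trace_toMatrix_mul_stabProj_mul_stabProj (p q : Fin 5 → PauliOp) (e : PauliOp) :
    (toMatrix e * (stabProj (toMatrix ∘ q) * toMatrix e * stabProj (toMatrix ∘ p))).trace =
      (1 / 16 : ℂ) * ↑(∑ v, ∑ w, normTrace (e * (subsetProd q w * e * subsetProd p v))) := by
  rw [stabProj_toMatrix, stabProj_toMatrix]
  simp only [smul_mul_assoc, mul_smul_comm, sum_mul, mul_sum, ← map_mul, trace_smul, trace_sum,
    trace_toMatrix, map_sum, smul_eq_mul]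
  simp only [← mul_sum]
  ring

lemma stabProj_mul_toMatrix_mul_stabProj_ne_zero (p q : Fin 5 → PauliOp) (e : PauliOp)
    (h : ∑ v, ∑ w, normTrace (e * (subsetProd q w * e * subsetProd p v)) ≠ 0) :
    stabProj (toMatrix ∘ q) * toMatrix e * stabProj (toMatrix ∘ p) ≠ 0 := by
  intro h0
  have htr := trace_toMatrix_mul_stabProj_mul_stabProj p q e
  rw [h0, mul_zero, trace_zero, eq_comm, mul_eq_zero, GaussianInt.toComplex_eq_zero] at htr
  exact htr.elim (by norm_num) h

end PauliStabilizer

open PauliOp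

def pauliA : Fin 5 → PauliOp :=
  ![⟨0, ![1, 1, 3, 0, 3, 0]⟩, ⟨0, ![3, 1, 1, 3, 0, 0]⟩, ⟨0, ![0, 3, 1, 1, 3, 0]⟩,
    ⟨0, ![3, 0, 3, 1, 1, 0]⟩, ⟨0, ![0, 0, 0, 0, 0, 1]⟩]

def pauliB : Fin 5 → PauliOp :=
  ![⟨0, ![2, 0, 3, 1, 1, 2]⟩, ⟨0, ![3, 1, 0, 0, 1, 3]⟩, ⟨0, ![0, 3, 1, 1, 1, 1]⟩,
    ⟨0, ![0, 0, 0, 3, 0, 3]⟩, ⟨0, ![3, 3, 3, 0, 3, 0]⟩]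

def pauliE : PauliOp := ⟨0, ![0, 0, 0, 0, 1, 0]⟩

lemma genA_eq_toMatrix_comp : genA = toMatrix ∘ pauliA := by
  ext1 i
  fin_cases i <;> simp [genA, pauliA, toMatrix_apply, iPow_zero]

lemma genB_eq_toMatrix_comp : genB = toMatrix ∘ pauliB := by
  ext1 i
  fin_cases i <;> simp [genB, pauliB, toMatrix_apply, iPow_zero]

lemma pauliString_eq_toMatrix_pauliE : pauliString ![0, 0, 0, 0, 1, 0] = toMatrix pauliE := by
  rw [toMatrix_apply, pauliE, iPow_zero, one_smul]

lemma pauliA_mul_comm : ∀ i j, pauliA i * pauliA j = pauliA j * pauliA i := by decide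

lemma pauliA_mul_self : ∀ i, pauliA i * pauliA i = 1 := by decide

lemma pauliB_mul_comm : ∀ i j, pauliB i * pauliB j = pauliB j * pauliB i := by decide

lemma pauliB_mul_self : ∀ i, pauliB i * pauliB i = 1 := by decide

lemma sum_normTrace_subsetProd_pauliA : ∑ v, normTrace (subsetProd pauliA v) = 1 := by decide

lemma sum_normTrace_subsetProd_pauliB : ∑ v, normTrace (subsetProd pauliB v) = 1 := by decide

lemma subsetProd_pauliA_eq_IYZZYI :
    subsetProd pauliA ![false, true, true, true, false] = ⟨0, ![0, 2, 3, 3, 2, 0]⟩ := by decide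

lemma subsetProd_pauliB_eq_neg_IYZZYI :
    subsetProd pauliB ![false, true, false, true, true] = ⟨2, ![0, 2, 3, 3, 2, 0]⟩ := by decide

set_option maxRecDepth 4000 in
lemma sum_normTrace_pauliE_conj_mul :
    ∑ v, ∑ w, normTrace (pauliE * (subsetProd pauliB w * pauliE * subsetProd pauliA v)) = 2 := by
  decide

/-- the stabilizer groups `S_a` and `S_b` each define a
2-dimensional joint `+1`-eigenspace in `(ℂ²)^{⊗6}`, these two subspaces are
orthogonal, and the resulting hybrid code has minimum distance `1`: the
weight-one error `E = IIIIXI` satisfies `P_b E P_a ≠ 0`. -/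
theorem stmt_18 :
    Module.finrank ℂ (stabCode genA) = 2 ∧
    Module.finrank ℂ (stabCode genB) = 2 ∧
    (∀ u ∈ stabCode genA, ∀ v ∈ stabCode genB, ⟪u, v⟫_ℂ = 0) ∧
    stabProj genB * pauliString ![0,0,0,0,1,0] * stabProj genA ≠ 0 := by
  rw [genA_eq_toMatrix_comp, genB_eq_toMatrix_comp, pauliString_eq_toMatrix_pauliE]
  refine ⟨?_, ?_, stabCode_toMatrix_orthogonal pauliA pauliB _ _ _ subsetProd_pauliA_eq_IYZZYI
    subsetProd_pauliB_eq_neg_IYZZYI, stabProj_mul_toMatrix_mul_stabProj_ne_zero _ _ _ ?_⟩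
  · have h := finrank_stabCode_toMatrix pauliA pauliA_mul_comm pauliA_mul_self
    rw [sum_normTrace_subsetProd_pauliA, map_one, mul_one] at h
    exact_mod_cast h
  · have h := finrank_stabCode_toMatrix pauliB pauliB_mul_comm pauliB_mul_self
    rw [sum_normTrace_subsetProd_pauliB, map_one, mul_one] at h
    exact_mod_cast h
  · rw [sum_normTrace_pauliE_conj_mul]
    decide
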